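/- Let R₁, R_z > 0 and p ∈ [1, ∞). Define, for z ∈ ℝ^d, a compactly supported probability measure μ on ℝ^d and y ∈ ℝ^d, the matrix G(z, μ, y) = (exp(⟨z, y⟩) / γ₂(z, μ)) · ((y − γ(z, μ)) zᵀ + I). Then there exists a constant Λ, depending only on R₁, R_z and p, such that for all z₁, z₂ ∈ B̄(R_z), all y₁, y₂ ∈ B̄(R₁), all probability measures μ₁, μ₂ supported in B̄(R₁), and every coupling π of μ₁ and μ₂, one has ‖G(z₁, μ₁, y₁) − G(z₂, μ₂, y₂)‖_op ≤ Λ · (‖y₁ − y₂‖ + ‖z₁ − z₂‖ + (∫ ‖x − y‖^p dπ(x, y))^{1/p}). -/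

import Mathlib

/-!
Every ingredient of `∂_μγ(z, μ)(y)` is bounded and Lipschitz in the configuration `(z, y, μ)`,
uniformly on the balls, for the cost `‖y₁ - y₂‖ + ‖z₁ - z₂‖ + W₁(μ₁, μ₂)`: the coordinates `z`, `y`
trivially, the weight `exp⟪z, y⟫` because `exp` is Lipschitz on bounded sets, the integrals
`γ₂(z, μ)` and `∫ exp⟪z, x⟫ x dμ(x)` by integrating the pointwise estimate against a coupling, and
`γ₂⁻¹` because `γ₂ ≥ exp(-R_z R₁)`. Sums, bilinear products and inverses bounded away from `0`
preserve this property, which assembles `∂_μγ`. Finally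
`W₁ ≤ ∫ ‖x - y‖ dπ ≤ (∫ ‖x - y‖ ^ p dπ) ^ (1 / p)` by Jensen's inequality.
-/

open MeasureTheory
open scoped RealInnerProductSpace

/-- The normalisation constant `γ₂(z, μ) = ∫ exp⟨z,y⟩ dμ(y)`. -/
noncomputable def gamma2 {d : ℕ} (z : EuclideanSpace ℝ (Fin d))
    (μ : Measure (EuclideanSpace ℝ (Fin d))) : ℝ :=
  ∫ y, Real.exp ⟪z, y⟫ ∂μ

/-- The attention map `γ(z, μ) = (∫ exp⟨z,y⟩ • y dμ(y)) / γ₂(z, μ)`. -/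
noncomputable def gammaAttn {d : ℕ} (z : EuclideanSpace ℝ (Fin d))
    (μ : Measure (EuclideanSpace ℝ (Fin d))) : EuclideanSpace ℝ (Fin d) :=
  (gamma2 z μ)⁻¹ • ∫ y, Real.exp ⟪z, y⟫ • y ∂μ

/-- The Lions derivative `∂_μγ(z,μ)(y) = (exp⟨z,y⟩/γ₂(z,μ)) ((y − γ(z,μ)) zᵀ + I)`,
viewed as a continuous linear map on `ℝ^d`. -/
noncomputable def lionsDerivGamma {d : ℕ} (z : EuclideanSpace ℝ (Fin d))
    (μ : MeasureTheory.Measure (EuclideanSpace ℝ (Fin d))) (y : EuclideanSpace ℝ (Fin d)) :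
    EuclideanSpace ℝ (Fin d) →L[ℝ] EuclideanSpace ℝ (Fin d) :=
  (Real.exp ⟪z, y⟫ / gamma2 z μ) •
    ((innerSL ℝ z).smulRight (y - gammaAttn z μ) +
      ContinuousLinearMap.id ℝ (EuclideanSpace ℝ (Fin d)))

theorem Real.abs_exp_sub_exp_le {a b M : ℝ} (ha : a ≤ M) (hb : b ≤ M) :
    |Real.exp a - Real.exp b| ≤ Real.exp M * |a - b| := by
  wlog hba : b ≤ a generalizing a b
  · rw [abs_sub_comm, abs_sub_comm a]
    exact this hb ha (le_of_not_ge hba)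
  have hexp : Real.exp a * Real.exp (b - a) = Real.exp b := by
    rw [← Real.exp_add, add_sub_cancel]
  have h1 := Real.add_one_le_exp (b - a)
  rw [abs_of_nonneg (sub_nonneg.2 (Real.exp_le_exp.2 hba)), abs_of_nonneg (sub_nonneg.2 hba)]
  calc Real.exp a - Real.exp b = Real.exp a * (1 - Real.exp (b - a)) := by rw [← hexp]; ring
    _ ≤ Real.exp a * (a - b) := mul_le_mul_of_nonneg_left (by linarith) (Real.exp_pos a).le
    _ ≤ Real.exp M * (a - b) := by gcongr

section BddLip

variable {ι 𝕜 F G H : Type*} [NormedAddCommGroup F] [NormedAddCommGroup G] [NormedAddCommGroup H]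
  {c : ι → ι → ℝ}

def IsBddLip (c : ι → ι → ℝ) (f : ι → F) : Prop :=
  ∃ M K : ℝ, 0 ≤ M ∧ 0 ≤ K ∧ (∀ i, ‖f i‖ ≤ M) ∧ ∀ i j, ‖f i - f j‖ ≤ K * c i j

namespace IsBddLip

theorem const (x : F) : IsBddLip c fun _ => x :=
  ⟨‖x‖, 0, norm_nonneg x, le_rfl, fun _ => le_rfl, fun _ _ => by simp⟩

theorem add {f g : ι → F} (hf : IsBddLip c f) (hg : IsBddLip c g) :
    IsBddLip c fun i => f i + g i := by
  obtain ⟨M₁, K₁, hM₁, hK₁, hb₁, hl₁⟩ := hf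
  obtain ⟨M₂, K₂, hM₂, hK₂, hb₂, hl₂⟩ := hg
  refine ⟨M₁ + M₂, K₁ + K₂, by positivity, by positivity,
    fun i => (norm_add_le _ _).trans (add_le_add (hb₁ i) (hb₂ i)), fun i j => ?_⟩
  calc ‖f i + g i - (f j + g j)‖ = ‖(f i - f j) + (g i - g j)‖ := by abel_nf
    _ ≤ K₁ * c i j + K₂ * c i j := (norm_add_le _ _).trans (add_le_add (hl₁ i j) (hl₂ i j))
    _ = (K₁ + K₂) * c i j := by ring

theorem sub {f g : ι → F} (hf : IsBddLip c f) (hg : IsBddLip c g) :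
    IsBddLip c fun i => f i - g i := by
  obtain ⟨M₁, K₁, hM₁, hK₁, hb₁, hl₁⟩ := hf
  obtain ⟨M₂, K₂, hM₂, hK₂, hb₂, hl₂⟩ := hg
  refine ⟨M₁ + M₂, K₁ + K₂, by positivity, by positivity,
    fun i => (norm_sub_le _ _).trans (add_le_add (hb₁ i) (hb₂ i)), fun i j => ?_⟩
  calc ‖f i - g i - (f j - g j)‖ = ‖(f i - f j) - (g i - g j)‖ := by abel_nf
    _ ≤ K₁ * c i j + K₂ * c i j := (norm_sub_le _ _).trans (add_le_add (hl₁ i j) (hl₂ i j))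
    _ = (K₁ + K₂) * c i j := by ring

theorem exp {f : ι → ℝ} (hf : IsBddLip c f) : IsBddLip c fun i => Real.exp (f i) := by
  obtain ⟨M, K, hM, hK, hb, hl⟩ := hf
  have hle : ∀ i, f i ≤ M := fun i => (le_abs_self _).trans (hb i)
  refine ⟨Real.exp M, Real.exp M * K, (Real.exp_pos M).le, by positivity, fun i => ?_,
    fun i j => ?_⟩
  · rw [Real.norm_eq_abs, abs_of_pos (Real.exp_pos _)]
    exact Real.exp_le_exp.2 (hle i)
  · rw [Real.norm_eq_abs, mul_assoc]
    exact (Real.abs_exp_sub_exp_le (hle i) (hle j)).trans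
      (mul_le_mul_of_nonneg_left (hl i j) (Real.exp_pos M).le)

variable [NontriviallyNormedField 𝕜] [NormedSpace 𝕜 F] [NormedSpace 𝕜 G] [NormedSpace 𝕜 H]

theorem clm_apply₂ (B : F →L[𝕜] G →L[𝕜] H) {f : ι → F} {g : ι → G}
    (hf : IsBddLip c f) (hg : IsBddLip c g) : IsBddLip c fun i => B (f i) (g i) := by
  obtain ⟨M₁, K₁, hM₁, hK₁, hb₁, hl₁⟩ := hf
  obtain ⟨M₂, K₂, hM₂, hK₂, hb₂, hl₂⟩ := hg
  refine ⟨‖B‖ * M₁ * M₂, ‖B‖ * (K₁ * M₂ + M₁ * K₂), by positivity, by positivity,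
    fun i => ?_, fun i j => ?_⟩
  · exact (B.le_opNorm₂ _ _).trans (by gcongr <;> [exact hb₁ i; exact hb₂ i])
  have hsplit : B (f i) (g i) - B (f j) (g j) = B (f i - f j) (g i) + B (f j) (g i - g j) := by
    simp only [map_sub, sub_apply]
    abel
  have h₁ : ‖f i - f j‖ * ‖g i‖ ≤ K₁ * c i j * M₂ :=
    mul_le_mul (hl₁ i j) (hb₂ i) (norm_nonneg _) ((norm_nonneg _).trans (hl₁ i j))
  have h₂ : ‖f j‖ * ‖g i - g j‖ ≤ M₁ * (K₂ * c i j) :=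
    mul_le_mul (hb₁ j) (hl₂ i j) (norm_nonneg _) hM₁
  calc ‖B (f i) (g i) - B (f j) (g j)‖
      ≤ ‖B‖ * (‖f i - f j‖ * ‖g i‖) + ‖B‖ * (‖f j‖ * ‖g i - g j‖) := by
        rw [hsplit, ← mul_assoc, ← mul_assoc]
        exact (norm_add_le _ _).trans (add_le_add (B.le_opNorm₂ _ _) (B.le_opNorm₂ _ _))
    _ ≤ ‖B‖ * (K₁ * c i j * M₂) + ‖B‖ * (M₁ * (K₂ * c i j)) := by gcongr
    _ = ‖B‖ * (K₁ * M₂ + M₁ * K₂) * c i j := by ring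

theorem smul {f : ι → 𝕜} {g : ι → G} (hf : IsBddLip c f) (hg : IsBddLip c g) :
    IsBddLip c fun i => f i • g i :=
  hf.clm_apply₂ (ContinuousLinearMap.lsmul 𝕜 𝕜) hg

theorem inv {f : ι → 𝕜} (hf : IsBddLip c f) {m : ℝ} (hm : 0 < m) (hfm : ∀ i, m ≤ ‖f i‖) :
    IsBddLip c fun i => (f i)⁻¹ := by
  obtain ⟨M, K, hM, hK, hb, hl⟩ := hf
  have hf0 : ∀ i, f i ≠ 0 := fun i => norm_pos_iff.1 (hm.trans_le (hfm i))
  refine ⟨m⁻¹, K / (m * m), by positivity, by positivity, fun i => ?_, fun i j => ?_⟩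
  · rw [norm_inv]
    exact inv_anti₀ hm (hfm i)
  · rw [inv_sub_inv (hf0 i) (hf0 j), norm_div, norm_mul, norm_sub_rev, div_le_iff₀
      (mul_pos (hm.trans_le (hfm i)) (hm.trans_le (hfm j)))]
    have hKc : 0 ≤ K * c i j := (norm_nonneg _).trans (hl i j)
    calc ‖f i - f j‖ ≤ K * c i j := hl i j
      _ = K / (m * m) * c i j * (m * m) := by field_simp
      _ ≤ K / (m * m) * c i j * (‖f i‖ * ‖f j‖) := by
        refine mul_le_mul_of_nonneg_left ?_ (by rw [div_mul_eq_mul_div]; positivity)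
        exact mul_le_mul (hfm i) (hfm j) hm.le (norm_nonneg _)

end IsBddLip

end BddLip

section Coupling

variable {α β F : Type*} [MeasurableSpace α] [MeasurableSpace β]
  [NormedAddCommGroup F] [NormedSpace ℝ F] {μ : Measure α} {ν : Measure β} {π : Measure (α × β)}

theorem norm_integral_sub_integral_le_of_coupling (hfst : π.fst = μ) (hsnd : π.snd = ν)
    {f : α → F} {g : β → F} (hf : Integrable f μ) (hg : Integrable g ν) {b : α × β → ℝ}
    (hb : Integrable b π) (hfgb : ∀ᵐ q ∂π, ‖f q.1 - g q.2‖ ≤ b q) :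
    ‖∫ x, f x ∂μ - ∫ y, g y ∂ν‖ ≤ ∫ q, b q ∂π := by
  subst hfst hsnd
  have hf' : Integrable (fun q => f q.1) π :=
    (integrable_map_measure hf.aestronglyMeasurable measurable_fst.aemeasurable).1 hf
  have hg' : Integrable (fun q => g q.2) π :=
    (integrable_map_measure hg.aestronglyMeasurable measurable_snd.aemeasurable).1 hg
  rw [Measure.fst, Measure.snd, integral_map measurable_fst.aemeasurable hf.aestronglyMeasurable,
    integral_map measurable_snd.aemeasurable hg.aestronglyMeasurable, ← integral_sub hf' hg']
  exact norm_integral_le_of_norm_le hb hfgb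

end Coupling

theorem integral_le_integral_rpow_rpow_one_div {α : Type*} [MeasurableSpace α] {μ : Measure α}
    [IsProbabilityMeasure μ] {f : α → ℝ} {p : ℝ} (hp : 1 ≤ p) (hf0 : ∀ᵐ x ∂μ, 0 ≤ f x)
    (hf : Integrable f μ) (hfp : Integrable (fun x => f x ^ p) μ) :
    ∫ x, f x ∂μ ≤ (∫ x, f x ^ p ∂μ) ^ (1 / p) := by
  have hjensen : (∫ x, f x ∂μ) ^ p ≤ ∫ x, f x ^ p ∂μ :=
    (convexOn_rpow hp).map_integral_le (Real.continuous_rpow_const (by linarith)).continuousOn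
      isClosed_Ici hf0 hf hfp
  calc ∫ x, f x ∂μ = ((∫ x, f x ∂μ) ^ p) ^ (1 / p) := by
        rw [← Real.rpow_mul (integral_nonneg_of_ae hf0), mul_one_div_cancel (by linarith),
          Real.rpow_one]
    _ ≤ (∫ x, f x ^ p ∂μ) ^ (1 / p) :=
        Real.rpow_le_rpow (Real.rpow_nonneg (integral_nonneg_of_ae hf0) p) hjensen (by positivity)

section Wasserstein

variable {E : Type*} [NormedAddCommGroup E] [MeasurableSpace E] {μ ν : Measure E}

/-- The `1`-Wasserstein distance, as an infimum over couplings (junk value `0` when there is no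
coupling, or when the first moments are infinite). -/
noncomputable def wasserstein1 (μ ν : Measure E) : ℝ :=
  ⨅ π : {π : Measure (E × E) // π.fst = μ ∧ π.snd = ν}, ∫ q, ‖q.1 - q.2‖ ∂(π : Measure (E × E))

theorem wasserstein1_nonneg : 0 ≤ wasserstein1 μ ν :=
  Real.iInf_nonneg fun _ => integral_nonneg fun _ => norm_nonneg _

theorem wasserstein1_le_integral {π : Measure (E × E)} (hfst : π.fst = μ) (hsnd : π.snd = ν) :
    wasserstein1 μ ν ≤ ∫ q, ‖q.1 - q.2‖ ∂π := by
  refine ciInf_le ⟨0, ?_⟩ (⟨π, hfst, hsnd⟩ : {π : Measure (E × E) // π.fst = μ ∧ π.snd = ν})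
  rintro _ ⟨π, rfl⟩
  exact integral_nonneg fun _ => norm_nonneg _

theorem le_mul_wasserstein1 [IsProbabilityMeasure μ] [IsProbabilityMeasure ν] {a K : ℝ}
    (hK : 0 ≤ K) (h : ∀ π : Measure (E × E), π.fst = μ → π.snd = ν → a ≤ K * ∫ q, ‖q.1 - q.2‖ ∂π) :
    a ≤ K * wasserstein1 μ ν := by
  have : Nonempty {π : Measure (E × E) // π.fst = μ ∧ π.snd = ν} :=
    ⟨⟨μ.prod ν, Measure.fst_prod, Measure.snd_prod⟩⟩
  rw [wasserstein1, Real.mul_iInf_of_nonneg hK]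
  exact le_ciInf fun π => h π.1 π.2.1 π.2.2

end Wasserstein

theorem ae_norm_le_of_measure_closedBall_eq_one {E : Type*} [NormedAddCommGroup E]
    [MeasurableSpace E] [OpensMeasurableSpace E] {μ : Measure E} [IsProbabilityMeasure μ] {R : ℝ}
    (h : μ (Metric.closedBall 0 R) = 1) : ∀ᵐ x ∂μ, ‖x‖ ≤ R := by
  have hball : Metric.closedBall (0 : E) R ∈ ae μ :=
    mem_ae_iff.2 ((prob_compl_eq_zero_iff measurableSet_closedBall).2 h)
  filter_upwards [hball] with x hx using mem_closedBall_zero_iff.1 hx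

structure AttnConfig (E : Type*) [NormedAddCommGroup E] [MeasurableSpace E] (R Rz : ℝ) where
  z : E
  y : E
  μ : ProbabilityMeasure E
  norm_z_le : ‖z‖ ≤ Rz
  norm_y_le : ‖y‖ ≤ R
  ae_norm_le : ∀ᵐ x ∂(μ : Measure E), ‖x‖ ≤ R

namespace AttnConfig

variable {E : Type*} [NormedAddCommGroup E] [MeasurableSpace E] {R Rz : ℝ}

noncomputable def cost (i j : AttnConfig E R Rz) : ℝ :=
  ‖i.y - j.y‖ + ‖i.z - j.z‖ + wasserstein1 (i.μ : Measure E) j.μ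

def withY (i : AttnConfig E R Rz) (x : E) (hx : ‖x‖ ≤ R) : AttnConfig E R Rz :=
  { i with y := x, norm_y_le := hx }

theorem isBddLip_z (hRz : 0 ≤ Rz) : IsBddLip cost fun i : AttnConfig E R Rz => i.z := by
  refine ⟨Rz, 1, hRz, zero_le_one, fun i => i.norm_z_le, fun i j => ?_⟩
  have := norm_nonneg (i.y - j.y)
  have := wasserstein1_nonneg (μ := (i.μ : Measure E)) (ν := j.μ)
  simp only [cost]
  linarith

theorem isBddLip_y (hR : 0 ≤ R) : IsBddLip cost fun i : AttnConfig E R Rz => i.y := by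
  refine ⟨R, 1, hR, zero_le_one, fun i => i.norm_y_le, fun i j => ?_⟩
  have := norm_nonneg (i.z - j.z)
  have := wasserstein1_nonneg (μ := (i.μ : Measure E)) (ν := j.μ)
  simp only [cost]
  linarith

theorem ae_norm_le_of_coupling {i j : AttnConfig E R Rz} {π : Measure (E × E)}
    (hfst : π.fst = i.μ) (hsnd : π.snd = j.μ) : ∀ᵐ q ∂π, ‖q.1‖ ≤ R ∧ ‖q.2‖ ≤ R := by
  have h₁ := i.ae_norm_le
  have h₂ := j.ae_norm_le
  rw [← hfst] at h₁
  rw [← hsnd] at h₂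
  filter_upwards [ae_of_ae_map measurable_fst.aemeasurable h₁,
    ae_of_ae_map measurable_snd.aemeasurable h₂] with q hq₁ hq₂ using ⟨hq₁, hq₂⟩

section InnerProduct

variable [InnerProductSpace ℝ E]

theorem isBddLip_exp_inner (hR : 0 ≤ R) (hRz : 0 ≤ Rz) :
    IsBddLip cost fun i : AttnConfig E R Rz => Real.exp ⟪i.z, i.y⟫ :=
  ((isBddLip_z hRz).clm_apply₂ (innerSL ℝ : E →L[ℝ] E →L[ℝ] ℝ) (isBddLip_y hR)).exp

theorem exp_neg_le_exp_inner (i : AttnConfig E R Rz) :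
    Real.exp (-(Rz * R)) ≤ Real.exp ⟪i.z, i.y⟫ :=
  Real.exp_le_exp.2 <| neg_le_of_abs_le <| (abs_real_inner_le_norm _ _).trans <|
    mul_le_mul i.norm_z_le i.norm_y_le (norm_nonneg _) ((norm_nonneg _).trans i.norm_z_le)

end InnerProduct

section Integral

variable [BorelSpace E] [SecondCountableTopology E] {F : Type*} [NormedAddCommGroup F]
  {φ : E → E → F}

theorem integrable_norm_sub_rpow {i j : AttnConfig E R Rz} {π : Measure (E × E)}
    (hfst : π.fst = i.μ) (hsnd : π.snd = j.μ) {p : ℝ} (hp : 0 ≤ p) :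
    Integrable (fun q => ‖q.1 - q.2‖ ^ p) π := by
  have : IsProbabilityMeasure π := ⟨by rw [← Measure.fst_univ, hfst, measure_univ]⟩
  refine Integrable.of_bound ?_ ((2 * R) ^ p) ?_
  · exact ((continuous_fst.sub continuous_snd).norm.rpow_const
      fun _ => Or.inr hp).aestronglyMeasurable
  filter_upwards [ae_norm_le_of_coupling hfst hsnd] with q ⟨hq₁, hq₂⟩
  rw [Real.norm_of_nonneg (Real.rpow_nonneg (norm_nonneg _) p)]
  gcongr
  linarith [norm_sub_le q.1 q.2]

theorem integrable (hφc : ∀ z, Continuous (φ z)) {M : ℝ}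
    (hM : ∀ i : AttnConfig E R Rz, ‖φ i.z i.y‖ ≤ M) (i : AttnConfig E R Rz) :
    Integrable (φ i.z) i.μ := by
  refine Integrable.of_bound (hφc i.z).aestronglyMeasurable M ?_
  filter_upwards [i.ae_norm_le] with x hx using hM (i.withY x hx)

theorem le_integral {φ : E → E → ℝ} (hφc : ∀ z, Continuous (φ z)) {M : ℝ}
    (hM : ∀ i : AttnConfig E R Rz, ‖φ i.z i.y‖ ≤ M) {m : ℝ}
    (hm : ∀ i : AttnConfig E R Rz, m ≤ φ i.z i.y) (i : AttnConfig E R Rz) :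
    m ≤ ∫ x, φ i.z x ∂(i.μ : Measure E) := by
  have := integral_mono_ae (integrable_const m) (integrable hφc hM i)
    (by filter_upwards [i.ae_norm_le] with x hx using hm (i.withY x hx))
  simpa using this

/-- The pointwise estimate at the configurations `i.withY x`, `j.withY x'` is integrated against a
coupling of the key distributions; the cost of those configurations still contains `W₁`, whence
the constant `2 * K`. -/
theorem isBddLip_integral [NormedSpace ℝ F] (hφc : ∀ z, Continuous (φ z))
    (hφ : IsBddLip cost fun i : AttnConfig E R Rz => φ i.z i.y) :
    IsBddLip cost fun i : AttnConfig E R Rz => ∫ x, φ i.z x ∂(i.μ : Measure E) := by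
  obtain ⟨M, K, hM, hK, hb, hl⟩ := hφ
  refine ⟨M, 2 * K, hM, by positivity, fun i => ?_, fun i j => ?_⟩
  · have := norm_integral_le_of_norm_le_const (μ := (i.μ : Measure E)) (f := φ i.z)
      (by filter_upwards [i.ae_norm_le] with x hx using hb (i.withY x hx))
    simpa using this
  set W := wasserstein1 (i.μ : Measure E) j.μ
  have hcoupling : ∀ π : Measure (E × E), π.fst = i.μ → π.snd = j.μ →
      ‖∫ x, φ i.z x ∂(i.μ : Measure E) - ∫ x, φ j.z x ∂(j.μ : Measure E)‖
        - K * (‖i.z - j.z‖ + W) ≤ K * ∫ q, ‖q.1 - q.2‖ ∂π := by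
    intro π hfst hsnd
    have : IsProbabilityMeasure π := ⟨by rw [← Measure.fst_univ, hfst, measure_univ]⟩
    have hd : Integrable (fun q : E × E => ‖q.1 - q.2‖) π := by
      simpa using integrable_norm_sub_rpow hfst hsnd zero_le_one
    have key := norm_integral_sub_integral_le_of_coupling hfst hsnd (integrable hφc hb i)
      (integrable hφc hb j) (b := fun q => K * ‖q.1 - q.2‖ + K * (‖i.z - j.z‖ + W))
      ((hd.const_mul K).add (integrable_const _)) ?_
    · rw [integral_add (hd.const_mul K) (integrable_const _), integral_const_mul,
        integral_const, probReal_univ, one_smul] at key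
      linarith
    filter_upwards [ae_norm_le_of_coupling hfst hsnd] with q ⟨hq₁, hq₂⟩
    have := hl (i.withY q.1 hq₁) (j.withY q.2 hq₂)
    simp only [cost, withY] at this
    linarith
  have hW := le_mul_wasserstein1 hK hcoupling
  have := norm_nonneg (i.y - j.y)
  have := norm_nonneg (i.z - j.z)
  simp only [cost]
  nlinarith

end Integral

theorem isBddLip_lionsDerivGamma {d : ℕ} (hR : 0 ≤ R) (hRz : 0 ≤ Rz) :
    IsBddLip cost fun i : AttnConfig (EuclideanSpace ℝ (Fin d)) R Rz =>
      lionsDerivGamma i.z i.μ i.y := by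
  have hexp := isBddLip_exp_inner (E := EuclideanSpace ℝ (Fin d)) hR hRz
  have hcont : ∀ z : EuclideanSpace ℝ (Fin d), Continuous fun x => Real.exp ⟪z, x⟫ :=
    fun z => (continuous_const.inner continuous_id).rexp
  have hγ₂ : IsBddLip cost fun i : AttnConfig _ R Rz => gamma2 i.z i.μ :=
    isBddLip_integral hcont hexp
  obtain ⟨M, -, -, -, hM, -⟩ := id hexp
  have hγ₂inv := hγ₂.inv (Real.exp_pos (-(Rz * R))) fun i =>
    (le_integral hcont hM exp_neg_le_exp_inner i).trans (le_abs_self _)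
  have hv := isBddLip_integral (fun z => (hcont z).smul continuous_id) (hexp.smul (isBddLip_y hR))
  have hγ : IsBddLip cost fun i : AttnConfig _ R Rz => gammaAttn i.z i.μ := hγ₂inv.smul hv
  have hA := (isBddLip_z hRz).clm_apply₂
    ((ContinuousLinearMap.smulRightL ℝ _ _).comp
      (innerSL ℝ : EuclideanSpace ℝ (Fin d) →L[ℝ] _ →L[ℝ] ℝ)) ((isBddLip_y hR).sub hγ)
  exact (hexp.smul hγ₂inv).smul (hA.add (IsBddLip.const (ContinuousLinearMap.id ℝ _)))

end AttnConfig

theorem stmt_10 {d : ℕ} (R₁ Rz p : ℝ) (hR₁ : 0 < R₁) (hRz : 0 < Rz) (hp : 1 ≤ p) :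
    ∃ Λ : ℝ, ∀ (z₁ z₂ : EuclideanSpace ℝ (Fin d)),
      z₁ ∈ Metric.closedBall (0 : EuclideanSpace ℝ (Fin d)) Rz →
      z₂ ∈ Metric.closedBall (0 : EuclideanSpace ℝ (Fin d)) Rz →
      ∀ (y₁ y₂ : EuclideanSpace ℝ (Fin d)),
      y₁ ∈ Metric.closedBall (0 : EuclideanSpace ℝ (Fin d)) R₁ →
      y₂ ∈ Metric.closedBall (0 : EuclideanSpace ℝ (Fin d)) R₁ →
      ∀ (μ₁ μ₂ : Measure (EuclideanSpace ℝ (Fin d))),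
      IsProbabilityMeasure μ₁ → IsProbabilityMeasure μ₂ →
      μ₁ (Metric.closedBall 0 R₁) = 1 → μ₂ (Metric.closedBall 0 R₁) = 1 →
      ∀ (π : Measure (EuclideanSpace ℝ (Fin d) × EuclideanSpace ℝ (Fin d))),
      IsProbabilityMeasure π → π.fst = μ₁ → π.snd = μ₂ →
      ‖lionsDerivGamma z₁ μ₁ y₁ - lionsDerivGamma z₂ μ₂ y₂‖ ≤
        Λ * (‖y₁ - y₂‖ + ‖z₁ - z₂‖ + (∫ q, ‖q.1 - q.2‖ ^ p ∂π) ^ (1 / p)) := by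
  obtain ⟨-, Λ, -, hΛ, -, hlip⟩ := AttnConfig.isBddLip_lionsDerivGamma (d := d) hR₁.le hRz.le
  refine ⟨Λ, fun z₁ z₂ hz₁ hz₂ y₁ y₂ hy₁ hy₂ μ₁ μ₂ hμ₁ hμ₂ hs₁ hs₂ π _ hfst hsnd => ?_⟩
  let i : AttnConfig _ R₁ Rz := ⟨z₁, y₁, ⟨μ₁, hμ₁⟩, mem_closedBall_zero_iff.1 hz₁,
    mem_closedBall_zero_iff.1 hy₁, ae_norm_le_of_measure_closedBall_eq_one (μ := μ₁) hs₁⟩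
  let j : AttnConfig _ R₁ Rz := ⟨z₂, y₂, ⟨μ₂, hμ₂⟩, mem_closedBall_zero_iff.1 hz₂,
    mem_closedBall_zero_iff.1 hy₂, ae_norm_le_of_measure_closedBall_eq_one (μ := μ₂) hs₂⟩
  have hW : wasserstein1 μ₁ μ₂ ≤ (∫ q, ‖q.1 - q.2‖ ^ p ∂π) ^ (1 / p) :=
    (wasserstein1_le_integral hfst hsnd).trans <| integral_le_integral_rpow_rpow_one_div hp
      (ae_of_all _ fun _ => norm_nonneg _)
      (by simpa using AttnConfig.integrable_norm_sub_rpow (i := i) (j := j) hfst hsnd zero_le_one)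
      (AttnConfig.integrable_norm_sub_rpow (i := i) (j := j) hfst hsnd (by linarith))
  calc _ ≤ Λ * i.cost j := hlip i j
    _ ≤ _ := mul_le_mul_of_nonneg_left (add_le_add le_rfl hW) hΛ
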